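/- arXiv:1912.11254 — 6 statements merged into one kernel-verified Lean document; each statement's English description precedes it below -/
import Mathlib

section
/- Let τ₁ be the unique positive solution of τ tanh τ = 1 and λ(τ) = 2τ²/cosh²(τ). Then λ'(τ) > 0 for 0 < τ < τ₁, λ'(τ₁) = 0, λ'(τ) < 0 for τ > τ₁, and λ(τ) → 0 as τ → ∞. -/
/-!
One computes `λ'(τ) = 4 τ (1 - τ tanh τ) / cosh² τ`, so for `τ > 0` the sign of `λ'` is that of
`1 - τ tanh τ`. Since `tanh` is increasing and nonnegative on `[0, ∞)`, the function `τ tanh τ` is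
strictly increasing there, hence crosses the value `1` only at `τ₁`. For the limit, write
`λ = 2 (τ / cosh τ)²` and use `cosh τ ≥ e^τ / 2`.
-/

open Real Set Filter

namespace Real

theorem tanh_strictMono : StrictMono tanh := fun a b hab => by
  have hmem (x : ℝ) : tanh x ∈ Ioo (-1) 1 := ⟨neg_one_lt_tanh x, tanh_lt_one x⟩
  rwa [← strictMonoOn_artanh.lt_iff_lt (hmem a) (hmem b), artanh_tanh, artanh_tanh]

theorem strictMonoOn_mul_tanh : StrictMonoOn (fun x => x * tanh x) (Ici 0) := by
  intro a ha b hb hab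
  have htanh_nonneg : 0 ≤ tanh a := by simpa using tanh_strictMono.monotone (mem_Ici.mp ha)
  calc a * tanh a ≤ b * tanh a := mul_le_mul_of_nonneg_right hab.le htanh_nonneg
    _ < b * tanh b := mul_lt_mul_of_pos_left (tanh_strictMono hab) (lt_of_le_of_lt ha hab)

theorem hasDerivAt_two_mul_sq_div_cosh_sq (x : ℝ) :
    HasDerivAt (fun x => 2 * x ^ 2 / cosh x ^ 2) (4 * x * (1 - x * tanh x) / cosh x ^ 2) x := by
  have hcosh : cosh x ≠ 0 := (cosh_pos x).ne'
  have hnum : HasDerivAt (fun x : ℝ => 2 * x ^ 2) (2 * (2 * x)) x := by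
    simpa using (hasDerivAt_pow 2 x).const_mul (2 : ℝ)
  have hden : HasDerivAt (fun x => cosh x ^ 2) (2 * cosh x * sinh x) x := by
    simpa using (hasDerivAt_cosh x).fun_pow 2
  refine (hnum.div hden (pow_ne_zero 2 hcosh)).congr_deriv ?_
  rw [tanh_eq_sinh_div_cosh]
  field_simp
  ring

theorem exp_div_two_le_cosh (x : ℝ) : exp x / 2 ≤ cosh x := by
  rw [cosh_eq]
  linarith [exp_pos (-x)]

theorem tendsto_div_cosh_atTop : Tendsto (fun x => x / cosh x) atTop (nhds 0) := by
  have hbound : Tendsto (fun x : ℝ => 2 * (x ^ 1 * exp (-x))) atTop (nhds 0) := by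
    simpa using (tendsto_pow_mul_exp_neg_atTop_nhds_zero 1).const_mul 2
  refine squeeze_zero' ?_ ?_ hbound
  · filter_upwards [eventually_ge_atTop 0] with x hx
    exact div_nonneg hx (cosh_pos x).le
  · filter_upwards [eventually_ge_atTop 0] with x hx
    calc x / cosh x ≤ x / (exp x / 2) :=
          div_le_div_of_nonneg_left hx (by positivity) (exp_div_two_le_cosh x)
      _ = 2 * (x ^ 1 * exp (-x)) := by rw [exp_neg]; field_simp

end Real

theorem lambda_monotonicity (τ₁ : ℝ) (hτ₁ : 0 < τ₁) (h1 : τ₁ * Real.tanh τ₁ = 1)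
    (lam : ℝ → ℝ) (hlam : ∀ τ, lam τ = 2 * τ ^ 2 / Real.cosh τ ^ 2) :
    (∀ τ : ℝ, 0 < τ → τ < τ₁ → 0 < deriv lam τ) ∧
    deriv lam τ₁ = 0 ∧
    (∀ τ : ℝ, τ₁ < τ → deriv lam τ < 0) ∧
    Filter.Tendsto lam Filter.atTop (nhds 0) := by
  obtain rfl : lam = fun τ => 2 * τ ^ 2 / cosh τ ^ 2 := funext hlam
  have hderiv (τ : ℝ) : deriv (fun τ => 2 * τ ^ 2 / cosh τ ^ 2) τ
      = 4 * τ * (1 - τ * tanh τ) / cosh τ ^ 2 :=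
    (hasDerivAt_two_mul_sq_div_cosh_sq τ).deriv
  refine ⟨fun τ hτ hττ₁ => ?_, by simp [hderiv, h1], fun τ hτ₁τ => ?_, ?_⟩
  · have hlt : τ * tanh τ < 1 := h1 ▸ strictMonoOn_mul_tanh hτ.le hτ₁.le hττ₁
    rw [hderiv]
    exact div_pos (mul_pos (by positivity) (sub_pos.mpr hlt)) (by positivity)
  · have hτ : 0 < τ := hτ₁.trans hτ₁τ
    have hgt : 1 < τ * tanh τ := h1 ▸ strictMonoOn_mul_tanh hτ₁.le hτ.le hτ₁τ
    rw [hderiv]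
    exact div_neg_of_neg_of_pos (mul_neg_of_pos_of_neg (by positivity) (sub_neg.mpr hgt))
      (by positivity)
  · simpa [div_pow, mul_div_assoc] using (tendsto_div_cosh_atTop.pow 2).const_mul 2
end

section
/- For each integer j ≥ 2 and each τ > 0, the system tan(√μ − (π/2)(j−1)) = √μ/(τ tanh τ) with (π/2)(j−1) < √μ < (π/2)j has a unique solution μ > 0. -/
open Real

lemma key_unique (c K : ℝ) (hc : π / 2 ≤ c) (hK : 0 < K) :
    ∃! x : ℝ, c < x ∧ x < c + π / 2 ∧ Real.tan (x - c) = x / K := by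
  have hπ : (1:ℝ) < π / 2 := by nlinarith [pi_gt_three]
  have hc1 : (1:ℝ) < c := lt_of_lt_of_le hπ hc
  have hsin : ∀ x ∈ Set.Ioo c (c + π/2), 0 < Real.sin (x - c) := by
    intro x hx
    apply Real.sin_pos_of_pos_of_lt_pi
    · linarith [hx.1]
    · linarith [hx.2, pi_pos]
  have hcos : ∀ x ∈ Set.Ioo c (c + π/2), 0 < Real.cos (x - c) := by
    intro x hx
    apply Real.cos_pos_of_mem_Ioo
    constructor
    · linarith [hx.1, pi_pos]
    · linarith [hx.2]
  set φ : ℝ → ℝ := fun x => x * Real.cos (x - c) / Real.sin (x - c) with hφ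
  have hanti : StrictAntiOn φ (Set.Ioo c (c + π/2)) := by
    apply strictAntiOn_of_deriv_neg (convex_Ioo _ _)
    · apply ContinuousOn.div
      · exact (continuousOn_id.mul (Real.continuous_cos.comp
          (continuous_id.sub continuous_const)).continuousOn)
      · exact (Real.continuous_sin.comp (continuous_id.sub continuous_const)).continuousOn
      · intro x hx; exact (hsin x hx).ne'
    · intro x hx
      rw [interior_Ioo] at hx
      have hs := hsin x hx
      have hco := hcos x hx
      have hd1 : HasDerivAt (fun y : ℝ => y - c) 1 x := (hasDerivAt_id x).sub_const c
      have hdsin : HasDerivAt (fun y : ℝ => Real.sin (y - c)) (Real.cos (x-c) * 1) x := hd1.sin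
      have hdcos : HasDerivAt (fun y : ℝ => Real.cos (y - c)) (-Real.sin (x-c) * 1) x := hd1.cos
      have hdnum : HasDerivAt (fun y : ℝ => y * Real.cos (y - c))
          (1 * Real.cos (x-c) + x * (-Real.sin (x-c) * 1)) x := (hasDerivAt_id x).mul hdcos
      have hdiv : HasDerivAt φ
          (((1 * Real.cos (x-c) + x * (-Real.sin (x-c) * 1)) * Real.sin (x-c)
            - x * Real.cos (x-c) * (Real.cos (x-c) * 1)) / (Real.sin (x-c))^2) x :=
        hdnum.div hdsin hs.ne'
      rw [hdiv.deriv]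
      apply div_neg_of_neg_of_pos
      · have h1 : Real.sin (x-c) ≤ 1 := Real.sin_le_one _
        have h2 : Real.cos (x-c) ≤ 1 := Real.cos_le_one _
        have hx1 : 1 < x := lt_trans hc1 hx.1
        have := Real.sin_sq_add_cos_sq (x - c)
        nlinarith
      · positivity
  -- existence
  set a : ℝ := c + Real.arctan (c / (2*K)) with ha
  set b : ℝ := c + Real.arctan ((c + π/2) / K) with hb
  have harg1 : (0:ℝ) < c / (2*K) := by positivity
  have harg2 : (0:ℝ) < (c + π/2)/K := by positivity
  have hamem : a ∈ Set.Ioo c (c + π/2) := by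
    rw [ha]
    constructor
    · have : 0 < Real.arctan (c / (2*K)) := by
        rw [← Real.arctan_zero]; exact Real.arctan_strictMono harg1
      linarith
    · have := Real.arctan_lt_pi_div_two (c / (2*K)); linarith
  have hbmem : b ∈ Set.Ioo c (c + π/2) := by
    rw [hb]
    constructor
    · have : 0 < Real.arctan ((c + π/2)/K) := by
        rw [← Real.arctan_zero]; exact Real.arctan_strictMono harg2
      linarith
    · have := Real.arctan_lt_pi_div_two ((c + π/2)/K); linarith
  have hab : a ≤ b := by
    rw [ha, hb]
    have : c / (2*K) < (c + π/2)/K := by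
      rw [div_lt_div_iff₀ (by positivity) hK]
      nlinarith [pi_pos]
    have := Real.arctan_strictMono this
    linarith
  have hsub : Set.Icc a b ⊆ Set.Ioo c (c + π/2) := by
    intro x hx
    exact ⟨lt_of_lt_of_le hamem.1 hx.1, lt_of_le_of_lt hx.2 hbmem.2⟩
  set F : ℝ → ℝ := fun x => Real.tan (x - c) - x / K with hF
  have hFcont : ContinuousOn F (Set.Icc a b) := by
    intro x hx
    have hx' := hsub hx
    apply ContinuousWithinAt.sub
    · apply ContinuousAt.continuousWithinAt
      have h1 : ContinuousAt (fun y : ℝ => y - c) x :=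
        (continuous_id.sub continuous_const).continuousAt
      exact ContinuousAt.comp (g := Real.tan) (f := fun y : ℝ => y - c) (x := x)
        (Real.continuousAt_tan.2 (hcos x hx').ne') h1
    · exact ((continuous_id.div_const K).continuousAt).continuousWithinAt
  have hFa : F a ≤ 0 := by
    have : Real.tan (a - c) = c / (2*K) := by
      rw [ha]; simp [Real.tan_arctan]
    rw [hF]; simp only [this]
    have : c / (2*K) < a / K := by
      rw [div_lt_div_iff₀ (by positivity) hK]
      nlinarith [hamem.1, hc1]
    linarith
  have hFb : 0 ≤ F b := by
    have htb : Real.tan (b - c) = (c + π/2) / K := by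
      rw [hb]; simp [Real.tan_arctan]
    rw [hF]; simp only [htb]
    have : b / K < (c + π/2) / K := by
      gcongr
      exact hbmem.2
    linarith
  have hivt : (0:ℝ) ∈ F '' Set.Icc a b := by
    apply intermediate_value_Icc hab hFcont
    exact ⟨hFa, hFb⟩
  obtain ⟨x, hxmem, hxeq⟩ := hivt
  have hxIoo := hsub hxmem
  have hxtan : Real.tan (x - c) = x / K := by
    have : Real.tan (x - c) - x / K = 0 := hxeq
    linarith
  refine ⟨x, ⟨hxIoo.1, hxIoo.2, hxtan⟩, ?_⟩
  -- uniqueness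
  have hphi : ∀ y, y ∈ Set.Ioo c (c + π/2) → Real.tan (y - c) = y / K → φ y = K := by
    intro y hy hty
    have hs := hsin y hy
    have hco := hcos y hy
    rw [Real.tan_eq_sin_div_cos] at hty
    have h1 : Real.sin (y - c) * K = y * Real.cos (y - c) := by
      field_simp at hty
      linarith [hty]
    rw [hφ]
    field_simp
    linarith [h1]
  intro y hy
  have h1 : φ y = K := hphi y ⟨hy.1, hy.2.1⟩ hy.2.2
  have h2 : φ x = K := hphi x hxIoo hxtan
  exact hanti.injOn ⟨hy.1, hy.2.1⟩ hxIoo (h1.trans h2.symm)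

theorem eigenvalue_equation_unique_solution (j : ℕ) (hj : 2 ≤ j) (τ : ℝ) (hτ : 0 < τ) :
    ∃! μ : ℝ, 0 < μ ∧
      Real.pi / 2 * ((j : ℝ) - 1) < Real.sqrt μ ∧
      Real.sqrt μ < Real.pi / 2 * (j : ℝ) ∧
      Real.tan (Real.sqrt μ - Real.pi / 2 * ((j : ℝ) - 1)) =
        Real.sqrt μ / (τ * Real.tanh τ) := by
  set c : ℝ := π / 2 * ((j : ℝ) - 1) with hcdef
  have hj2 : (2:ℝ) ≤ (j:ℝ) := by exact_mod_cast hj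
  have hc : π / 2 ≤ c := by
    rw [hcdef]
    nlinarith [pi_pos]
  have hK : 0 < τ * Real.tanh τ := by
    apply mul_pos hτ
    rw [Real.tanh_eq_sinh_div_cosh]
    exact div_pos (Real.sinh_pos_iff.2 hτ) (Real.cosh_pos τ)
  have hcj : π / 2 * (j : ℝ) = c + π / 2 := by rw [hcdef]; ring
  obtain ⟨x, ⟨hx1, hx2, hx3⟩, hxuniq⟩ := key_unique c (τ * Real.tanh τ) hc hK
  have hx0 : 0 < x := lt_trans (by linarith [pi_pos]) hx1
  refine ⟨x^2, ?_, ?_⟩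
  · have hsq : Real.sqrt (x^2) = x := Real.sqrt_sq hx0.le
    refine ⟨by positivity, ?_, ?_, ?_⟩
    · rw [hsq]; exact hx1
    · rw [hsq, hcj]; exact hx2
    · rw [hsq]; exact hx3
  · intro μ ⟨hμ0, hμ1, hμ2, hμ3⟩
    have hy : Real.sqrt μ = x := by
      apply hxuniq
      rw [hcj] at hμ2
      exact ⟨hμ1, hμ2, hμ3⟩
    rw [← hy, Real.sq_sqrt hμ0.le]
end

section
/- Fix τ > 0 and μ > 0 satisfying √μ + arctan(τ tanh τ/√μ) = (π/2)j for some positive integer j. Then the function φ(x) = √(μ/τ² + tanh²(τx)) · sin(√μ x + arctan(τ tanh(τx)/√μ) + (π/2)j) satisfies φ'' + λ e^u φ + μ φ = 0 on (-1,1) and φ(−1) = φ(1) = 0, where λ = 2τ²/cosh²(τ) and u(x) = 2 log(cosh τ/cosh(τx)). -/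
/-!
Writing `a = √μ / τ` and `t = tanh (τ x)`, the identity
`√(a² + t²) · sin (θ + arctan (t / a)) = a sin θ + t cos θ` turns `φ` into
`a sin (√μ x + c) + t cos (√μ x + c)`. Since `λ e^u = 2τ² / cosh² (τ x) = 2τ² (1 - t²)` and
`t' = τ (1 - t²)`, differentiating this twice shows that it solves the equation. At `x = ±1`
the phase of the sine equals `∓ (√μ + arctan (τ tanh τ / √μ)) + (π/2) j`, which the
dispersion relation makes `0` or `j π`.
-/

open Real Set

namespace Real

lemma one_sub_tanh_sq (x : ℝ) : 1 - tanh x ^ 2 = (cosh x ^ 2)⁻¹ := by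
  have hc := (cosh_pos x).ne'
  rw [tanh_eq_sinh_div_cosh]
  field_simp
  linarith [cosh_sq x]

lemma hasDerivAt_tanh (x : ℝ) : HasDerivAt tanh (1 - tanh x ^ 2) x := by
  have hc := (cosh_pos x).ne'
  have h := (hasDerivAt_sinh x).div (hasDerivAt_cosh x) hc
  rw [show tanh = fun y => sinh y / cosh y from funext tanh_eq_sinh_div_cosh]
  refine h.congr_deriv ?_
  field_simp

lemma hasDerivAt_tanh_const_mul (τ x : ℝ) :
    HasDerivAt (fun y => tanh (τ * y)) (τ * (1 - tanh (τ * x) ^ 2)) x := by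
  refine ((hasDerivAt_tanh (τ * x)).comp x ((hasDerivAt_id x).const_mul τ)).congr_deriv ?_
  ring

lemma sqrt_sq_add_sq_mul_sin_add_arctan {a : ℝ} (ha : 0 < a) (s θ : ℝ) :
    √(a ^ 2 + s ^ 2) * sin (θ + arctan (s / a)) = a * sin θ + s * cos θ := by
  have hscale : √(a ^ 2 + s ^ 2) = a * √(1 + (s / a) ^ 2) := by
    rw [← sqrt_sq ha.le, ← sqrt_mul (sq_nonneg a), sqrt_sq ha.le]
    congr 1
    field_simp
  have hpos : 0 < √(1 + (s / a) ^ 2) := sqrt_pos.2 (by positivity)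
  rw [hscale, sin_add, cos_arctan, sin_arctan]
  field_simp

end Real

noncomputable def gelfandMode (τ m c x : ℝ) : ℝ :=
  m / τ * sin (m * x + c) + tanh (τ * x) * cos (m * x + c)

section gelfandMode

variable (τ m c : ℝ)

lemma hasDerivAt_gelfandMode (x : ℝ) :
    HasDerivAt (gelfandMode τ m c)
      ((m ^ 2 / τ + τ * (1 - tanh (τ * x) ^ 2)) * cos (m * x + c)
        - m * tanh (τ * x) * sin (m * x + c)) x := by
  have hphase : HasDerivAt (fun y => m * y + c) m x := by
    simpa using ((hasDerivAt_id x).const_mul m).add_const c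
  have h := (((hasDerivAt_sin _).comp x hphase).const_mul (m / τ)).add
    ((hasDerivAt_tanh_const_mul τ x).mul ((hasDerivAt_cos _).comp x hphase))
  refine h.congr_deriv ?_
  simp only [Function.comp_apply]
  ring

lemma hasDerivAt_deriv_gelfandMode (x : ℝ) :
    HasDerivAt (deriv (gelfandMode τ m c))
      (-((2 * τ ^ 2 * tanh (τ * x) * (1 - tanh (τ * x) ^ 2) + m ^ 2 * tanh (τ * x))
          * cos (m * x + c))
        - (m ^ 3 / τ + 2 * m * τ * (1 - tanh (τ * x) ^ 2)) * sin (m * x + c)) x := by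
  have hphase : HasDerivAt (fun y => m * y + c) m x := by
    simpa using ((hasDerivAt_id x).const_mul m).add_const c
  have htanh := hasDerivAt_tanh_const_mul τ x
  have h := ((((htanh.pow 2).const_sub 1).const_mul τ).const_add (m ^ 2 / τ)).mul
      ((hasDerivAt_cos _).comp x hphase)
    |>.sub ((htanh.const_mul m).mul ((hasDerivAt_sin _).comp x hphase))
  rw [funext fun y => (hasDerivAt_gelfandMode τ m c y).deriv]
  refine h.congr_deriv ?_
  simp only [Function.comp_apply, Pi.pow_apply]
  push_cast
  ring

lemma gelfandMode_ode (hτ : τ ≠ 0) (x : ℝ) :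
    deriv (deriv (gelfandMode τ m c)) x
      + 2 * τ ^ 2 * (1 - tanh (τ * x) ^ 2) * gelfandMode τ m c x
      + m ^ 2 * gelfandMode τ m c x = 0 := by
  rw [(hasDerivAt_deriv_gelfandMode τ m c x).deriv, gelfandMode]
  field_simp
  ring

end gelfandMode

lemma gelfand_weight (τ x : ℝ) :
    2 * τ ^ 2 / cosh τ ^ 2 * exp (2 * log (cosh τ / cosh (τ * x)))
      = 2 * τ ^ 2 * (1 - tanh (τ * x) ^ 2) := by
  have hτ := (cosh_pos τ).ne'
  have hx := (cosh_pos (τ * x)).ne'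
  rw [one_sub_tanh_sq, ← log_rpow (div_pos (cosh_pos τ) (cosh_pos (τ * x))),
    exp_log (by positivity), rpow_two]
  field_simp

theorem eigenfunction_positive_eigenvalue_general (τ μ : ℝ) (hτ : 0 < τ) (hμ : 0 < μ)
    (j : ℕ)
    (heq : Real.sqrt μ + Real.arctan (τ * Real.tanh τ / Real.sqrt μ) = Real.pi / 2 * (j : ℝ))
    (lam : ℝ) (hlam : lam = 2 * τ ^ 2 / Real.cosh τ ^ 2)
    (u : ℝ → ℝ) (hu : ∀ x, u x = 2 * Real.log (Real.cosh τ / Real.cosh (τ * x)))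
    (φ : ℝ → ℝ)
    (hφ : ∀ x, φ x = Real.sqrt (μ / τ ^ 2 + Real.tanh (τ * x) ^ 2) *
      Real.sin (Real.sqrt μ * x + Real.arctan (τ * Real.tanh (τ * x) / Real.sqrt μ) +
        Real.pi / 2 * (j : ℝ))) :
    (∀ x ∈ Set.Ioo (-1 : ℝ) 1,
      deriv (deriv φ) x + lam * Real.exp (u x) * φ x + μ * φ x = 0) ∧
    φ (-1) = 0 ∧ φ 1 = 0 := by
  have hm : 0 < √μ := sqrt_pos.2 hμ
  have hφ_mode : φ = gelfandMode τ (√μ) (π / 2 * j) := funext fun x => by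
    have hamp : μ / τ ^ 2 = (√μ / τ) ^ 2 := by rw [div_pow, sq_sqrt hμ.le]
    have hslope : τ * tanh (τ * x) / √μ = tanh (τ * x) / (√μ / τ) := by field_simp
    rw [hφ, hamp, hslope, add_right_comm,
      sqrt_sq_add_sq_mul_sin_add_arctan (div_pos hm hτ), gelfandMode]
  refine ⟨fun x _ => ?_, ?_, ?_⟩
  · have hode := gelfandMode_ode τ (√μ) (π / 2 * j) hτ.ne' x
    rw [sq_sqrt hμ.le] at hode
    rw [hlam, hu, gelfand_weight, hφ_mode]
    linear_combination hode
  · have hphase : √μ * (-1) + arctan (τ * tanh (τ * (-1)) / √μ) + π / 2 * j = 0 := by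
      simp only [mul_neg, mul_one, tanh_neg, mul_neg, neg_div, arctan_neg]
      linarith
    rw [hφ, hphase, sin_zero, mul_zero]
  · have hphase : √μ * 1 + arctan (τ * tanh (τ * 1) / √μ) + π / 2 * j = j * π := by
      rw [mul_one, mul_one, heq]
      ring
    rw [hφ, hphase, sin_nat_mul_pi, mul_zero]

theorem eigenfunction_positive_eigenvalue (τ μ : ℝ) (hτ : 0 < τ) (hμ : 0 < μ)
    (j : ℕ) (hj : 1 ≤ j)
    (heq : Real.sqrt μ + Real.arctan (τ * Real.tanh τ / Real.sqrt μ) = Real.pi / 2 * (j : ℝ))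
    (lam : ℝ) (hlam : lam = 2 * τ ^ 2 / Real.cosh τ ^ 2)
    (u : ℝ → ℝ) (hu : ∀ x, u x = 2 * Real.log (Real.cosh τ / Real.cosh (τ * x)))
    (φ : ℝ → ℝ)
    (hφ : ∀ x, φ x = Real.sqrt (μ / τ ^ 2 + Real.tanh (τ * x) ^ 2) *
      Real.sin (Real.sqrt μ * x + Real.arctan (τ * Real.tanh (τ * x) / Real.sqrt μ) +
        Real.pi / 2 * (j : ℝ))) :
    (∀ x ∈ Set.Ioo (-1 : ℝ) 1,
      deriv (deriv φ) x + lam * Real.exp (u x) * φ x + μ * φ x = 0) ∧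
    φ (-1) = 0 ∧ φ 1 = 0 :=
  eigenfunction_positive_eigenvalue_general τ μ hτ hμ j heq lam hlam u hu φ hφ
end

section
/- For j ≥ 2, let μ_j(τ) > 0 be the unique solution of √μ + arctan(τ tanh τ/√μ) = (π/2)j with (π/2)(j−1) < √μ < (π/2)j. Then (π/2)(j−1) ≤ √(μ_j(τ)) ≤ (π/2)(j−1) + arctan(πj/(2τ tanh τ)), and consequently √(μ_j(τ)) → (π/2)(j−1) as τ → ∞. -/
/-! Using `arctan (1 / x) = π / 2 - arctan x`, the defining equation
`√μ + arctan (τ tanh τ / √μ) = (π / 2) j` becomes `√μ = (π / 2) (j - 1) + arctan (√μ / (τ tanh τ))`.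
Since `√μ < (π / 2) j` and `arctan` is monotone, this gives the upper bound, and the error term
tends to `0` because `τ tanh τ → ∞`. -/

open Real Filter

namespace Real

lemma tanh_pos {x : ℝ} (hx : 0 < x) : 0 < tanh x := by
  rw [tanh_eq_sinh_div_cosh]
  exact div_pos (sinh_pos_iff.mpr hx) (cosh_pos x)

lemma tanh_eq_one_sub (x : ℝ) : tanh x = 1 - 2 / (exp (2 * x) + 1) := by
  have hx : exp x ^ 2 = exp (2 * x) := by rw [← exp_nat_mul]; norm_num
  rw [tanh_eq_sinh_div_cosh, sinh_eq, cosh_eq, exp_neg, ← hx]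
  field_simp
  ring

lemma tendsto_tanh_atTop : Tendsto tanh atTop (nhds 1) := by
  have hden : Tendsto (fun x => exp (2 * x) + 1) atTop atTop :=
    tendsto_atTop_add_const_right _ _
      (tendsto_exp_atTop.comp (tendsto_id.const_mul_atTop two_pos))
  rw [show tanh = fun x => 1 - 2 / (exp (2 * x) + 1) from funext tanh_eq_one_sub]
  simpa using (tendsto_const_nhds.div_atTop hden).const_sub (1 : ℝ)

lemma tendsto_mul_tanh_atTop : Tendsto (fun x => x * tanh x) atTop atTop :=
  tendsto_id.atTop_mul_pos one_pos tendsto_tanh_atTop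

lemma eq_sub_add_arctan_of_add_arctan_div_eq {a s c : ℝ} (ha : 0 < a) (hs : 0 < s)
    (h : s + arctan (a / s) = c) : s = c - π / 2 + arctan (s / a) := by
  rw [← inv_div, arctan_inv_of_pos (div_pos hs ha)] at h
  linarith

lemma le_sub_add_arctan_of_add_arctan_div_eq {a s c : ℝ} (ha : 0 < a) (hs : 0 < s)
    (h : s + arctan (a / s) = c) (hsc : s ≤ c) : s ≤ c - π / 2 + arctan (c / a) := by
  calc s = c - π / 2 + arctan (s / a) := eq_sub_add_arctan_of_add_arctan_div_eq ha hs h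
    _ ≤ c - π / 2 + arctan (c / a) := by gcongr

end Real

theorem eigenvalue_asymptotics_large_tau_general (j : ℕ) (μ : ℝ → ℝ)
    (hμ : ∀ τ : ℝ, 0 < τ →
      0 < μ τ ∧
      Real.pi / 2 * ((j : ℝ) - 1) < Real.sqrt (μ τ) ∧
      Real.sqrt (μ τ) < Real.pi / 2 * (j : ℝ) ∧
      Real.sqrt (μ τ) + Real.arctan (τ * Real.tanh τ / Real.sqrt (μ τ)) =
        Real.pi / 2 * (j : ℝ)) :
    (∀ τ : ℝ, 0 < τ →
      Real.pi / 2 * ((j : ℝ) - 1) ≤ Real.sqrt (μ τ) ∧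
      Real.sqrt (μ τ) ≤ Real.pi / 2 * ((j : ℝ) - 1) +
        Real.arctan (Real.pi * (j : ℝ) / (2 * τ * Real.tanh τ))) ∧
    Filter.Tendsto (fun τ => Real.sqrt (μ τ)) Filter.atTop
      (nhds (Real.pi / 2 * ((j : ℝ) - 1))) := by
  have bounds : ∀ τ : ℝ, 0 < τ →
      π / 2 * ((j : ℝ) - 1) ≤ √(μ τ) ∧
      √(μ τ) ≤ π / 2 * ((j : ℝ) - 1) + arctan (π * j / (2 * τ * tanh τ)) := by
    intro τ hτ
    obtain ⟨hμ_pos, hlower, hupper, heq⟩ := hμ τ hτ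
    have h := le_sub_add_arctan_of_add_arctan_div_eq (mul_pos hτ (tanh_pos hτ))
      (sqrt_pos.mpr hμ_pos) heq hupper.le
    rw [show π / 2 * j - π / 2 = π / 2 * (j - 1) by ring,
      show π / 2 * j / (τ * tanh τ) = π * j / (2 * τ * tanh τ) by ring] at h
    exact ⟨hlower.le, h⟩
  have herror : Tendsto (fun τ => arctan (π * j / (2 * τ * tanh τ))) atTop (nhds 0) := by
    have hden : Tendsto (fun τ => 2 * τ * tanh τ) atTop atTop := by
      simpa only [mul_assoc] using tendsto_mul_tanh_atTop.const_mul_atTop two_pos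
    simpa [Function.comp_def] using (continuous_arctan.tendsto 0).comp (tendsto_const_nhds.div_atTop hden)
  refine ⟨bounds, tendsto_of_tendsto_of_tendsto_of_le_of_le' tendsto_const_nhds
    (by simpa using tendsto_const_nhds.add herror) ?_ ?_⟩
  · filter_upwards [eventually_gt_atTop 0] with τ hτ using (bounds τ hτ).1
  · filter_upwards [eventually_gt_atTop 0] with τ hτ using (bounds τ hτ).2

theorem eigenvalue_asymptotics_large_tau (j : ℕ) (hj : 2 ≤ j) (μ : ℝ → ℝ)
    (hμ : ∀ τ : ℝ, 0 < τ →
      0 < μ τ ∧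
      Real.pi / 2 * ((j : ℝ) - 1) < Real.sqrt (μ τ) ∧
      Real.sqrt (μ τ) < Real.pi / 2 * (j : ℝ) ∧
      Real.sqrt (μ τ) + Real.arctan (τ * Real.tanh τ / Real.sqrt (μ τ)) =
        Real.pi / 2 * (j : ℝ)) :
    (∀ τ : ℝ, 0 < τ →
      Real.pi / 2 * ((j : ℝ) - 1) ≤ Real.sqrt (μ τ) ∧
      Real.sqrt (μ τ) ≤ Real.pi / 2 * ((j : ℝ) - 1) +
        Real.arctan (Real.pi * (j : ℝ) / (2 * τ * Real.tanh τ))) ∧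
    Filter.Tendsto (fun τ => Real.sqrt (μ τ)) Filter.atTop
      (nhds (Real.pi / 2 * ((j : ℝ) - 1))) :=
  eigenvalue_asymptotics_large_tau_general j μ hμ
end

section
/- Let φ₁(x;τ) = ν cosh(νx) − τ sinh(νx) tanh(τx) where ν = ν(τ) satisfies tanh ν = ν/(τ tanh τ). Then (1/τ)φ₁(y/τ; τ) → 1/cosh y uniformly on compact subsets of ℝ as τ → ∞. -/
open Real Filter

private lemma my_continuous_tanh : Continuous Real.tanh := by
  have h : Real.tanh = fun x => Real.sinh x / Real.cosh x :=
    funext fun x => Real.tanh_eq_sinh_div_cosh x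
  rw [h]
  exact Real.continuous_sinh.div Real.continuous_cosh fun x => (Real.cosh_pos x).ne'

private lemma my_tanh_pos {x : ℝ} (hx : 0 < x) : 0 < Real.tanh x := by
  rw [Real.tanh_eq_sinh_div_cosh]
  exact div_pos (Real.sinh_pos_iff.mpr hx) (Real.cosh_pos _)

private lemma my_tanh_mono {a b : ℝ} (hab : a ≤ b) : Real.tanh a ≤ Real.tanh b := by
  rw [Real.tanh_eq_sinh_div_cosh, Real.tanh_eq_sinh_div_cosh,
    div_le_div_iff₀ (Real.cosh_pos _) (Real.cosh_pos _)]
  nlinarith [Real.sinh_sub b a, Real.sinh_nonneg_iff.mpr (sub_nonneg.mpr hab)]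

private lemma my_tanh_eq (x : ℝ) :
    Real.tanh x = (1 - Real.exp (-(2*x))) / (1 + Real.exp (-(2*x))) := by
  have h1 : Real.exp (-(2*x)) = Real.exp (-x) * Real.exp (-x) := by
    rw [← Real.exp_add]; ring_nf
  have h2 : Real.exp x * Real.exp (-x) = 1 := by rw [← Real.exp_add]; simp
  have h3 : 0 < Real.exp x + Real.exp (-x) := by positivity
  have h4 : (0:ℝ) < 1 + Real.exp (-(2*x)) := by positivity
  rw [Real.tanh_eq_sinh_div_cosh, Real.sinh_eq, Real.cosh_eq]
  rw [div_eq_div_iff (by positivity) h4.ne']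
  linear_combination Real.exp x * h1 + Real.exp (-x) * h2

private lemma my_tendsto_tanh : Tendsto Real.tanh atTop (nhds 1) := by
  have he : Tendsto (fun x : ℝ => Real.exp (-(2*x))) atTop (nhds 0) := by
    apply Real.tendsto_exp_atBot.comp
    apply Filter.tendsto_neg_atTop_atBot.comp
    exact Filter.Tendsto.const_mul_atTop two_pos tendsto_id
  have : Tendsto (fun x : ℝ => (1 - Real.exp (-(2*x))) / (1 + Real.exp (-(2*x))))
      atTop (nhds ((1 - 0) / (1 + 0))) := by
    exact Filter.Tendsto.div (tendsto_const_nhds.sub he) (tendsto_const_nhds.add he) (by norm_num)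
  norm_num at this
  exact this.congr (fun x => (my_tanh_eq x).symm)

theorem first_eigenfunction_limit (τ₁ : ℝ) (hτ₁ : 0 < τ₁) (h1 : τ₁ * Real.tanh τ₁ = 1)
    (ν : ℝ → ℝ)
    (hν : ∀ τ : ℝ, τ₁ < τ → 0 < ν τ ∧ Real.tanh (ν τ) = ν τ / (τ * Real.tanh τ))
    (φ : ℝ → ℝ → ℝ)
    (hφ : ∀ τ x, φ τ x = ν τ * Real.cosh (ν τ * x) -
      τ * Real.sinh (ν τ * x) * Real.tanh (τ * x)) :
    ∀ K : Set ℝ, IsCompact K →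
      TendstoUniformlyOn (fun τ y => (1 / τ) * φ τ (y / τ))
        (fun y => 1 / Real.cosh y) Filter.atTop K := by
  intro K hK
  have htp : 0 < Real.tanh τ₁ := my_tanh_pos hτ₁
  -- ν τ → ∞
  have hlb : ∀ τ : ℝ, τ₁ < τ → Real.log (τ * Real.tanh τ₁) ≤ ν τ := by
    intro τ hτ
    obtain ⟨hνpos, hνeq⟩ := hν τ hτ
    have hτ0 : 0 < τ := hτ₁.trans hτ
    have htτ : 0 < Real.tanh τ := my_tanh_pos hτ0
    have hc : 0 < τ * Real.tanh τ := mul_pos hτ0 htτ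
    -- cosh (ν τ) ≥ τ * tanh τ
    have hs : Real.sinh (ν τ) / Real.cosh (ν τ) = ν τ / (τ * Real.tanh τ) := by
      rw [← Real.tanh_eq_sinh_div_cosh]; exact hνeq
    have hcross : (τ * Real.tanh τ) * Real.sinh (ν τ) = ν τ * Real.cosh (ν τ) := by
      field_simp at hs
      linarith [hs]
    have hsinh : ν τ ≤ Real.sinh (ν τ) := Real.self_le_sinh_iff.mpr hνpos.le
    have hcosh : τ * Real.tanh τ ≤ Real.cosh (ν τ) := by
      nlinarith [Real.cosh_pos (x := ν τ)]
    have hexp : Real.cosh (ν τ) ≤ Real.exp (ν τ) := by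
      have h6 : Real.exp (-(ν τ)) ≤ Real.exp (ν τ) := Real.exp_le_exp.mpr (by linarith)
      have h7 := Real.cosh_eq (ν τ)
      linarith
    have h5 : τ * Real.tanh τ₁ ≤ Real.exp (ν τ) := by
      have := my_tanh_mono (le_of_lt hτ : τ₁ ≤ τ)
      nlinarith
    calc Real.log (τ * Real.tanh τ₁) ≤ Real.log (Real.exp (ν τ)) :=
          Real.log_le_log (by positivity) h5
      _ = ν τ := Real.log_exp _
  have hν_top : Tendsto ν atTop atTop := by
    apply tendsto_atTop_mono' atTop
      (Filter.eventually_atTop.mpr ⟨τ₁ + 1, fun τ hτ => hlb τ (by linarith)⟩)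
    exact Real.tendsto_log_atTop.comp (Filter.Tendsto.atTop_mul_const htp tendsto_id)
  -- a τ := ν τ / τ → 1
  have ha : Tendsto (fun τ => ν τ / τ) atTop (nhds 1) := by
    have key : ∀ᶠ τ in atTop, Real.tanh τ * Real.tanh (ν τ) = ν τ / τ := by
      filter_upwards [Filter.eventually_gt_atTop τ₁] with τ hτ
      obtain ⟨hνpos, hνeq⟩ := hν τ hτ
      have hτ0 : 0 < τ := hτ₁.trans hτ
      have htτ : 0 < Real.tanh τ := my_tanh_pos hτ0
      rw [hνeq]
      field_simp
    have : Tendsto (fun τ => Real.tanh τ * Real.tanh (ν τ)) atTop (nhds (1 * 1)) :=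
      Filter.Tendsto.mul my_tendsto_tanh (my_tendsto_tanh.comp hν_top)
    simpa using this.congr' key
  -- the model function
  set F : ℝ → ℝ → ℝ := fun a y => a * Real.cosh (a * y) - Real.sinh (a * y) * Real.tanh y
    with hF
  have hFcont : Continuous (fun q : ℝ × ℝ => F q.1 q.2) := by
    apply Continuous.sub
    · exact continuous_fst.mul (Real.continuous_cosh.comp (continuous_fst.mul continuous_snd))
    · exact (Real.continuous_sinh.comp (continuous_fst.mul continuous_snd)).mul
        (my_continuous_tanh.comp continuous_snd)
  have hTLU : TendstoLocallyUniformly (fun τ y => F (ν τ / τ) y) (fun y => F 1 y) atTop := by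
    rw [tendstoLocallyUniformly_iff_forall_tendsto]
    intro x
    apply Filter.Tendsto.mono_right _ (nhds_le_uniformity (F 1 x))
    apply Filter.Tendsto.prodMk_nhds
    · exact (hFcont.tendsto (1, x)).comp (tendsto_const_nhds.prodMk_nhds tendsto_snd)
    · exact (hFcont.tendsto (1, x)).comp ((ha.comp tendsto_fst).prodMk_nhds tendsto_snd)
  have hTU : TendstoUniformlyOn (fun τ y => F (ν τ / τ) y) (fun y => F 1 y) atTop K :=
    (tendstoLocallyUniformlyOn_iff_tendstoUniformlyOn_of_compact hK).mp
      hTLU.tendstoLocallyUniformlyOn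
  have hTU2 : TendstoUniformlyOn (fun τ y => (1 / τ) * φ τ (y / τ)) (fun y => F 1 y) atTop K := by
    apply hTU.congr
    filter_upwards [Filter.eventually_gt_atTop (0:ℝ)] with τ hτ0
    intro y _
    show F (ν τ / τ) y = 1 / τ * φ τ (y / τ)
    rw [hφ]
    have h1 : τ * (y / τ) = y := by field_simp
    have h2 : ν τ * (y / τ) = ν τ / τ * y := by ring
    rw [h1, h2, hF]
    field_simp
  have hfeq : Set.EqOn (fun y => F 1 y) (fun y => 1 / Real.cosh y) K := by
    intro y _
    have hc := Real.cosh_pos (x := y)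
    have := Real.cosh_sq_sub_sinh_sq y
    simp only [hF, one_mul]
    rw [Real.tanh_eq_sinh_div_cosh, eq_div_iff hc.ne']
    field_simp
    nlinarith
  exact hTU2.congr_right hfeq
end

section
/- For each integer j ≥ 1 and each τ ∈ (0, π/2), the system tan((π/2)(j+1) − √μ) = √μ/(τ tan τ) with (π/2)j < √μ < (π/2)(j+1) has a unique solution μ_j > 0; moreover √μ_j → (π/2)j as τ → 0⁺ and √μ_j → (π/2)(j+1) as τ → π/2⁻. -/
open Real Set Filter Topology

/-!
With `c = τ tan τ` and `t = (j + 1)π/2 - √μ ∈ (0, π/2)`, the equation reads `c tan t = √μ`, i.e.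
`c tan t + t = (j + 1)π/2`; the left side increases from `-∞` to `∞` on `(-π/2, π/2)`, which gives
existence and uniqueness. From `t ≤ tan t` we get `t ≤ √μ / c`, and with `u = √μ - jπ/2 = π/2 - t`
the equation becomes `√μ tan u = c`, so `u ≤ tan u` and `u ≤ √μ` give `u² ≤ c`. Since `c → 0` as
`τ → 0⁺` and `c → ∞` as `τ → π/2⁻`, both limits follow by squeezing.
-/

lemma strictMonoOn_mul_tan_add {c : ℝ} (hc : 0 < c) :
    StrictMonoOn (fun t => c * tan t + t) (Ioo (-(π / 2)) (π / 2)) :=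
  ((strictMono_mul_left_of_pos hc).comp_strictMonoOn strictMonoOn_tan).add
    (strictMono_id.strictMonoOn _)

lemma surjOn_mul_tan_add {c : ℝ} (hc : 0 < c) :
    SurjOn (fun t => c * tan t + t) (Ioo (-(π / 2)) (π / 2)) univ := by
  have hπ := neg_lt_self pi_div_two_pos
  have hcont : ContinuousOn (fun t => c * tan t + t) (Ioo (-(π / 2)) (π / 2)) :=
    (continuousOn_const.mul continuousOn_tan_Ioo).add continuousOn_id
  refine hcont.surjOn_of_tendsto (nonempty_Ioo.2 hπ) ?_ ?_
  · rw [tendsto_comp_coe_Ioo_atBot (f := fun t => c * tan t + t) hπ]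
    exact (tendsto_tan_neg_pi_div_two.const_mul_atBot hc).atBot_add
      (tendsto_id.mono_left nhdsWithin_le_nhds)
  · rw [tendsto_comp_coe_Ioo_atTop (f := fun t => c * tan t + t) hπ]
    exact (tendsto_tan_pi_div_two.const_mul_atTop hc).atTop_add
      (tendsto_id.mono_left nhdsWithin_le_nhds)

/-- The equation of the statement for `s = √μ`, with `a = jπ/2` and `c = τ tan τ`. -/
def IsEigenRoot (a c s : ℝ) : Prop :=
  a < s ∧ s < a + π / 2 ∧ tan (a + π / 2 - s) = s / c

section IsEigenRoot

variable {a c s : ℝ}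

lemma isEigenRoot_iff (hc : 0 < c) :
    IsEigenRoot a c s ↔ a + π / 2 - s ∈ Ioo 0 (π / 2) ∧ c * tan (a + π / 2 - s) = s := by
  rw [IsEigenRoot, eq_div_iff hc.ne', mul_comm, mem_Ioo]
  constructor
  · rintro ⟨has, hsa, heq⟩
    exact ⟨⟨by linarith, by linarith⟩, heq⟩
  · rintro ⟨⟨hsa, has⟩, heq⟩
    exact ⟨by linarith, by linarith, heq⟩

lemma existsUnique_isEigenRoot (ha : 0 ≤ a) (hc : 0 < c) : ∃! s, IsEigenRoot a c s := by
  have hmono := strictMonoOn_mul_tan_add hc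
  have h0 : (0 : ℝ) ∈ Ioo (-(π / 2)) (π / 2) := ⟨by linarith [pi_pos], by linarith [pi_pos]⟩
  obtain ⟨t, ht, htK⟩ := surjOn_mul_tan_add hc (mem_univ (a + π / 2))
  have ht0 : 0 < t := by
    by_contra! h
    have := hmono.monotoneOn ht h0 h
    simp only [tan_zero, mul_zero, add_zero] at this htK
    linarith [pi_div_two_pos]
  refine ⟨a + π / 2 - t, (isEigenRoot_iff hc).2 ?_, fun s hs => ?_⟩
  · simp only [sub_sub_cancel]
    exact ⟨⟨ht0, ht.2⟩, by linarith⟩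
  · obtain ⟨⟨hs0, hs1⟩, hs⟩ := (isEigenRoot_iff hc).1 hs
    have : a + π / 2 - s = t :=
      hmono.injOn ⟨by linarith, hs1⟩ ht (by linarith)
    linarith

lemma IsEigenRoot.sq_sub_le (ha : 0 ≤ a) (hc : 0 < c) (h : IsEigenRoot a c s) :
    (s - a) ^ 2 ≤ c := by
  obtain ⟨has, hsa, heq⟩ := h
  have hu : s - a < π / 2 := by linarith
  have htan : 0 < tan (s - a) := tan_pos_of_pos_of_lt_pi_div_two (by linarith) hu
  rw [show a + π / 2 - s = π / 2 - (s - a) by ring, tan_pi_div_two_sub, inv_eq_iff_eq_inv,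
    inv_div] at heq
  calc (s - a) ^ 2 = (s - a) * (s - a) := sq _
    _ ≤ s * tan (s - a) :=
      mul_le_mul (by linarith) (le_tan (by linarith) hu) (by linarith) (by linarith)
    _ = c := by rw [heq]; field_simp [(ha.trans_lt has).ne']

lemma IsEigenRoot.sub_le_div (hc : 0 < c) (h : IsEigenRoot a c s) :
    a + π / 2 - s ≤ (a + π / 2) / c := by
  obtain ⟨⟨ht0, ht1⟩, heq⟩ := (isEigenRoot_iff hc).1 h
  rw [le_div_iff₀ hc]
  nlinarith [le_tan ht0.le ht1, h.2.1]

end IsEigenRoot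

section Limits

variable {ι : Type*} {l : Filter ι} {a : ℝ} {c s : ι → ℝ}

lemma tendsto_of_isEigenRoot_of_tendsto_zero (ha : 0 ≤ a) (hc : Tendsto c l (𝓝 0))
    (hs : ∀ᶠ i in l, 0 < c i ∧ IsEigenRoot a (c i) (s i)) : Tendsto s l (𝓝 a) := by
  have hupper : Tendsto (fun i => a + √(c i)) l (𝓝 a) := by
    simpa using tendsto_const_nhds.add (continuous_sqrt.tendsto 0 |>.comp hc)
  refine tendsto_of_tendsto_of_tendsto_of_le_of_le' tendsto_const_nhds hupper ?_ ?_
  · filter_upwards [hs] with i hi using hi.2.1.le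
  · filter_upwards [hs] with i ⟨hci, hi⟩
    linarith [le_abs_self (s i - a), abs_le_sqrt (hi.sq_sub_le ha hci)]

lemma tendsto_of_isEigenRoot_of_tendsto_atTop (hc : Tendsto c l atTop)
    (hs : ∀ᶠ i in l, 0 < c i ∧ IsEigenRoot a (c i) (s i)) : Tendsto s l (𝓝 (a + π / 2)) := by
  have hlower : Tendsto (fun i => a + π / 2 - (a + π / 2) / c i) l (𝓝 (a + π / 2)) := by
    simpa using tendsto_const_nhds.sub (tendsto_const_nhds.div_atTop hc)
  refine tendsto_of_tendsto_of_tendsto_of_le_of_le' hlower tendsto_const_nhds ?_ ?_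
  · filter_upwards [hs] with i ⟨hci, hi⟩
    linarith [hi.sub_le_div hci]
  · filter_upwards [hs] with i hi using hi.2.2.1.le

end Limits

lemma tendsto_mul_tan_nhdsGT_zero : Tendsto (fun τ => τ * tan τ) (𝓝[>] 0) (𝓝 0) := by
  simpa using (tendsto_id.mul (continuousAt_tan.2 (by simp : cos 0 ≠ 0))).mono_left
    (nhdsWithin_le_nhds (s := Ioi (0 : ℝ)))

lemma tendsto_mul_tan_nhdsLT_pi_div_two :
    Tendsto (fun τ => τ * tan τ) (𝓝[<] (π / 2)) atTop :=
  (tendsto_id.mono_left nhdsWithin_le_nhds).pos_mul_atTop pi_div_two_pos tendsto_tan_pi_div_two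

lemma existsUnique_sqrt_of_existsUnique {P : ℝ → Prop} (h : ∃! s, P s)
    (hpos : ∀ s, P s → 0 < s) : ∃! μ, 0 < μ ∧ P √μ := by
  obtain ⟨s, hs, huniq⟩ := h
  have hs0 := hpos s hs
  refine ⟨s ^ 2, ⟨by positivity, by rwa [sqrt_sq hs0.le]⟩, fun μ ⟨hμ, hμs⟩ => ?_⟩
  rw [← huniq _ hμs, sq_sqrt hμ.le]

theorem eigenvalues_negative_exponent_general (j : ℕ) :
    (∀ τ ∈ Set.Ioo (0 : ℝ) (Real.pi / 2),
      ∃! μ : ℝ, 0 < μ ∧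
        Real.pi / 2 * (j : ℝ) < Real.sqrt μ ∧
        Real.sqrt μ < Real.pi / 2 * ((j : ℝ) + 1) ∧
        Real.tan (Real.pi / 2 * ((j : ℝ) + 1) - Real.sqrt μ) =
          Real.sqrt μ / (τ * Real.tan τ)) ∧
    (∀ μf : ℝ → ℝ,
      (∀ τ ∈ Set.Ioo (0 : ℝ) (Real.pi / 2),
        0 < μf τ ∧
        Real.pi / 2 * (j : ℝ) < Real.sqrt (μf τ) ∧
        Real.sqrt (μf τ) < Real.pi / 2 * ((j : ℝ) + 1) ∧
        Real.tan (Real.pi / 2 * ((j : ℝ) + 1) - Real.sqrt (μf τ)) =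
          Real.sqrt (μf τ) / (τ * Real.tan τ)) →
      Filter.Tendsto (fun τ => Real.sqrt (μf τ)) (nhdsWithin 0 (Set.Ioi 0))
          (nhds (Real.pi / 2 * (j : ℝ))) ∧
      Filter.Tendsto (fun τ => Real.sqrt (μf τ))
          (nhdsWithin (Real.pi / 2) (Set.Iio (Real.pi / 2)))
          (nhds (Real.pi / 2 * ((j : ℝ) + 1)))) := by
  have ha : 0 ≤ π / 2 * (j : ℝ) := by positivity
  have hc : ∀ τ ∈ Ioo (0 : ℝ) (π / 2), 0 < τ * tan τ := fun τ hτ =>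
    mul_pos hτ.1 (tan_pos_of_pos_of_lt_pi_div_two hτ.1 hτ.2)
  simp only [mul_add_one (π / 2)]
  refine ⟨fun τ hτ => existsUnique_sqrt_of_existsUnique (existsUnique_isEigenRoot ha (hc τ hτ))
    fun s hs => ha.trans_lt hs.1, fun μf hμf => ⟨?_, ?_⟩⟩
  · refine tendsto_of_isEigenRoot_of_tendsto_zero ha tendsto_mul_tan_nhdsGT_zero ?_
    filter_upwards [Ioo_mem_nhdsGT pi_div_two_pos] with τ hτ using ⟨hc τ hτ, (hμf τ hτ).2⟩
  · refine tendsto_of_isEigenRoot_of_tendsto_atTop tendsto_mul_tan_nhdsLT_pi_div_two ?_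
    filter_upwards [Ioo_mem_nhdsLT pi_div_two_pos] with τ hτ using ⟨hc τ hτ, (hμf τ hτ).2⟩

theorem eigenvalues_negative_exponent (j : ℕ) (hj : 1 ≤ j) :
    (∀ τ ∈ Set.Ioo (0 : ℝ) (Real.pi / 2),
      ∃! μ : ℝ, 0 < μ ∧
        Real.pi / 2 * (j : ℝ) < Real.sqrt μ ∧
        Real.sqrt μ < Real.pi / 2 * ((j : ℝ) + 1) ∧
        Real.tan (Real.pi / 2 * ((j : ℝ) + 1) - Real.sqrt μ) =
          Real.sqrt μ / (τ * Real.tan τ)) ∧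
    (∀ μf : ℝ → ℝ,
      (∀ τ ∈ Set.Ioo (0 : ℝ) (Real.pi / 2),
        0 < μf τ ∧
        Real.pi / 2 * (j : ℝ) < Real.sqrt (μf τ) ∧
        Real.sqrt (μf τ) < Real.pi / 2 * ((j : ℝ) + 1) ∧
        Real.tan (Real.pi / 2 * ((j : ℝ) + 1) - Real.sqrt (μf τ)) =
          Real.sqrt (μf τ) / (τ * Real.tan τ)) →
      Filter.Tendsto (fun τ => Real.sqrt (μf τ)) (nhdsWithin 0 (Set.Ioi 0))
          (nhds (Real.pi / 2 * (j : ℝ))) ∧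
      Filter.Tendsto (fun τ => Real.sqrt (μf τ))
          (nhdsWithin (Real.pi / 2) (Set.Iio (Real.pi / 2)))
          (nhds (Real.pi / 2 * ((j : ℝ) + 1)))) :=
  eigenvalues_negative_exponent_general j
end
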